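/- Let g : ℕ → ℝ → ℝ be defined recursively by g 0 t = 1 and g (k+1) t = (1/(1 − t)) · ∫_t^1 (g k u)/(2 − u) du. Then for every k ∈ ℕ and every real t with 0 < t < 1, g k t ≥ t. -/

import Mathlib

/-!
The operator `T g t = (1 - t)⁻¹ ∫_t^1 g u / (2 - u) du` (`unfairLoopStep`), with `g (k+1) = T (g k)`,
preserves the class of functions continuous on `[0, 1)` with `u ≤ g u ≤ 1` there. The upper bound
holds because `g u / (2 - u) ≤ 1`. For the lower bound, the tangent line of `u / (2 - u)` at
`u = 1` gives `u / (2 - u) ≥ 2u - 1`, and `∫_t^1 (2u - 1) du = t (1 - t)` exactly. Continuity is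
carried along only so that the integrals are genuine (not the junk value of a non-integrable
function).
-/

open MeasureTheory Set intervalIntegral

/-- The nested integrals arising as the probability of repeating the loop
`e₃e₄e₅` at least `k` further times from state `(ℓ₀,(0,t))` in the stochastic
timed automaton `𝒜_unfair`:  `g 0 t = 1` and
`g (k+1) t = (1/(1-t)) · ∫_t^1 g k u / (2-u) du`. -/
noncomputable def unfairLoopProb : ℕ → ℝ → ℝ
  | 0, _ => 1
  | k + 1, t => (1 / (1 - t)) * ∫ u in t..1, unfairLoopProb k u / (2 - u)

theorem IntervalIntegrable.of_continuousOn_Ico_of_bounded {E : Type*} [NormedAddCommGroup E]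
    {f : ℝ → E} {a b C : ℝ} (hab : a ≤ b) (hf : ContinuousOn f (Ico a b))
    (hC : ∀ x ∈ Ico a b, ‖f x‖ ≤ C) : IntervalIntegrable f volume a b := by
  rw [intervalIntegrable_iff_integrableOn_Ioc_of_le hab, integrableOn_Ioc_iff_integrableOn_Ioo]
  refine ⟨(hf.mono Ioo_subset_Ico_self).aestronglyMeasurable measurableSet_Ioo,
    .restrict_of_bounded (C := C) measure_Ioo_lt_top ?_⟩
  filter_upwards [ae_restrict_mem measurableSet_Ioo] with x hx
  exact hC x (Ioo_subset_Ico_self hx)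

theorem two_mul_sub_one_le_div_two_sub {u : ℝ} (hu : u < 2) : 2 * u - 1 ≤ u / (2 - u) := by
  rw [le_div_iff₀ (by linarith)]
  nlinarith [sq_nonneg (u - 1)]

theorem integral_two_mul_sub_one (t : ℝ) : ∫ u in t..1, (2 * u - 1) = t * (1 - t) := by
  rw [intervalIntegral.integral_sub (intervalIntegrable_id.const_mul 2) intervalIntegrable_const,
    intervalIntegral.integral_const_mul, integral_id, intervalIntegral.integral_const]
  simp
  ring

noncomputable def unfairLoopStep (g : ℝ → ℝ) (t : ℝ) : ℝ :=
  (1 / (1 - t)) * ∫ u in t..1, g u / (2 - u)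

theorem unfairLoopProb_succ (k : ℕ) :
    unfairLoopProb (k + 1) = unfairLoopStep (unfairLoopProb k) :=
  rfl

section unfairLoopStep

variable {g : ℝ → ℝ}

theorem intervalIntegrable_div_two_sub (hg : ContinuousOn g (Ico 0 1))
    (hg_bdd : ∀ u ∈ Ico (0 : ℝ) 1, |g u| ≤ 1) {t : ℝ} (ht : t ∈ Icc (0 : ℝ) 1) :
    IntervalIntegrable (fun u => g u / (2 - u)) volume t 1 := by
  have hmem : ∀ u ∈ Ico t 1, u ∈ Ico (0 : ℝ) 1 := fun u hu => ⟨ht.1.trans hu.1, hu.2⟩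
  refine .of_continuousOn_Ico_of_bounded ht.2 (C := 1) ?_ fun u hu => ?_
  · exact (hg.mono fun u hu => hmem u hu).div (by fun_prop) fun u hu => by linarith [hu.2]
  · have hu' := hmem u hu
    have h2u : 0 < 2 - u := by linarith [hu'.2]
    rw [Real.norm_eq_abs, abs_div, abs_of_pos h2u, div_le_one h2u]
    linarith [hg_bdd u hu', hu'.2]

theorem continuousOn_unfairLoopStep (hg : ContinuousOn g (Ico 0 1))
    (hg_bdd : ∀ u ∈ Ico (0 : ℝ) 1, |g u| ≤ 1) : ContinuousOn (unfairLoopStep g) (Ico 0 1) := by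
  have hint : IntegrableOn (fun u => g u / (2 - u)) (uIcc 0 1) := by
    rw [uIcc_of_le zero_le_one, ← intervalIntegrable_iff_integrableOn_Icc_of_le zero_le_one]
    exact intervalIntegrable_div_two_sub hg hg_bdd (left_mem_Icc.2 zero_le_one)
  refine ContinuousOn.mul ?_ ((continuousOn_primitive_interval_left hint).mono ?_)
  · exact continuousOn_const.div (by fun_prop) fun t ht => by linarith [ht.2]
  · rw [uIcc_of_le zero_le_one]
    exact Ico_subset_Icc_self

theorem le_unfairLoopStep {t : ℝ} (ht : t < 1)
    (hg_int : IntervalIntegrable (fun u => g u / (2 - u)) volume t 1)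
    (hg : ∀ u ∈ Ioo t 1, u ≤ g u) : t ≤ unfairLoopStep g t := by
  have hpos : 0 < 1 - t := by linarith
  have hmono : ∫ u in t..1, (2 * u - 1) ≤ ∫ u in t..1, g u / (2 - u) := by
    refine integral_mono_on_of_le_Ioo ht.le
      ((intervalIntegrable_id.const_mul 2).sub intervalIntegrable_const) hg_int fun u hu => ?_
    calc 2 * u - 1 ≤ u / (2 - u) := two_mul_sub_one_le_div_two_sub (by linarith [hu.2])
      _ ≤ g u / (2 - u) := div_le_div_of_nonneg_right (hg u hu) (by linarith [hu.2])
  rw [integral_two_mul_sub_one] at hmono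
  rw [unfairLoopStep, one_div, ← div_eq_inv_mul, le_div_iff₀ hpos]
  linarith

theorem unfairLoopStep_le_one {t : ℝ} (ht : t < 1)
    (hg_int : IntervalIntegrable (fun u => g u / (2 - u)) volume t 1)
    (hg : ∀ u ∈ Ioo t 1, g u ≤ 1) : unfairLoopStep g t ≤ 1 := by
  have hpos : 0 < 1 - t := by linarith
  have hmono : ∫ u in t..1, g u / (2 - u) ≤ ∫ _ in t..1, (1 : ℝ) := by
    refine integral_mono_on_of_le_Ioo ht.le hg_int intervalIntegrable_const fun u hu => ?_
    rw [div_le_one (by linarith [hu.2])]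
    linarith [hg u hu, hu.2]
  rw [unfairLoopStep, one_div, ← div_eq_inv_mul, div_le_one hpos]
  simpa using hmono

theorem unfairLoopStep_preserves_bounds (hg : ContinuousOn g (Ico 0 1))
    (hg_bdd : ∀ u ∈ Ico (0 : ℝ) 1, u ≤ g u ∧ g u ≤ 1) :
    ContinuousOn (unfairLoopStep g) (Ico 0 1) ∧
      ∀ t ∈ Ico (0 : ℝ) 1, t ≤ unfairLoopStep g t ∧ unfairLoopStep g t ≤ 1 := by
  have hg_abs : ∀ u ∈ Ico (0 : ℝ) 1, |g u| ≤ 1 := fun u hu =>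
    abs_le.2 ⟨by linarith [hu.1, (hg_bdd u hu).1], (hg_bdd u hu).2⟩
  refine ⟨continuousOn_unfairLoopStep hg hg_abs, fun t ht => ?_⟩
  have hint := intervalIntegrable_div_two_sub hg hg_abs (Ico_subset_Icc_self ht)
  have hsub : Ioo t 1 ⊆ Ico 0 1 := fun u hu => ⟨ht.1.trans hu.1.le, hu.2⟩
  exact ⟨le_unfairLoopStep ht.2 hint fun u hu => (hg_bdd u (hsub hu)).1,
    unfairLoopStep_le_one ht.2 hint fun u hu => (hg_bdd u (hsub hu)).2⟩

end unfairLoopStep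

theorem unfairLoopProb_bounds (k : ℕ) :
    ContinuousOn (unfairLoopProb k) (Ico 0 1) ∧
      ∀ t ∈ Ico (0 : ℝ) 1, t ≤ unfairLoopProb k t ∧ unfairLoopProb k t ≤ 1 := by
  induction k with
  | zero => exact ⟨continuousOn_const, fun t ht => ⟨ht.2.le, le_rfl⟩⟩
  | succ k ih => exact unfairLoopProb_succ k ▸ unfairLoopStep_preserves_bounds ih.1 ih.2

/-- For every `k ∈ ℕ` and every real `t` with `0 < t < 1`, `g k t ≥ t`. -/
theorem unfairLoopProb_ge (k : ℕ) (t : ℝ) (h0 : 0 < t) (h1 : t < 1) :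
    unfairLoopProb k t ≥ t :=
  ((unfairLoopProb_bounds k).2 t ⟨h0.le, h1⟩).1
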